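/- In the reduction graph G built from a monotone CNF formula φ with n variables and m clauses — consisting of a path ℓ_i, x_i⁺, x_i⁻, r_i for each variable x_i, and a clause vertex c_j adjacent to the literal vertices of its clause — any minimal vertex cover X of G satisfies |X ∩ {ℓ_i, x_i⁺, x_i⁻, r_i}| = 2 for every i; consequently every minimal vertex cover has size at most 2n + m, with equality if and only if X contains all clause vertices. -/

import Mathlib

def IsVC {V : Type*} (G : SimpleGraph V) (X : Finset V) : Prop :=
  ∀ ⦃a b : V⦄, G.Adj a b → a ∈ X ∨ b ∈ X

def IsMinVC {V : Type*} (G : SimpleGraph V) (X : Finset V) : Prop :=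
  IsVC G X ∧ ∀ Y : Finset V, Y ⊂ X → ¬ IsVC G Y

/-- The reduction graph built from a monotone CNF formula with `n` variables
and `m` clauses.  Variable gadget `i` is the path `ℓᵢ, xᵢ⁺, xᵢ⁻, rᵢ`, encoded
as `Sum.inl (i, 0), Sum.inl (i, 1), Sum.inl (i, 2), Sum.inl (i, 3)`; the clause
vertex `Sum.inr j` is adjacent to `xᵢ⁺` whenever `i ∈ pos j` and to `xᵢ⁻`
whenever `i ∈ neg j`. -/
def RedGraph (n m : ℕ) (pos neg : Fin m → Finset (Fin n)) :
    SimpleGraph ((Fin n × Fin 4) ⊕ Fin m) :=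
  SimpleGraph.fromRel (fun a b =>
    match a, b with
    | Sum.inl (i, p), Sum.inl (i', q) =>
        i = i' ∧ ((p = 0 ∧ q = 1) ∨ (p = 1 ∧ q = 2) ∨ (p = 2 ∧ q = 3))
    | Sum.inr j, Sum.inl (i, p) => (p = 1 ∧ i ∈ pos j) ∨ (p = 2 ∧ i ∈ neg j)
    | _, _ => False)

/-!
Minimality of a vertex cover `X` means that every vertex of `X` has a neighbour outside `X`.
The ends `ℓᵢ` and `rᵢ` of a variable path have a single neighbour, so `X` contains neither both
of `ℓᵢ, xᵢ⁺` nor both of `xᵢ⁻, rᵢ`; together with the three path edges being covered this leaves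
exactly two vertices of each path in `X`. Counting the clause vertices separately then gives
`|X| = 2n + #{j | cⱼ ∈ X}`.
-/

open Finset

section

variable {V : Type*} {G : SimpleGraph V} {X : Finset V}

theorem IsMinVC.exists_adj_notMem (hX : IsMinVC G X) {v : V} (hv : v ∈ X) :
    ∃ u, G.Adj v u ∧ u ∉ X := by
  classical
  by_contra! h
  refine hX.2 (X.erase v) (erase_ssubset hv) fun a b hab => ?_
  by_cases ha : a = v
  · subst ha; exact Or.inr (mem_erase.2 ⟨hab.ne.symm, h b hab⟩)
  by_cases hb : b = v
  · subst hb; exact Or.inl (mem_erase.2 ⟨hab.ne, h a hab.symm⟩)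
  exact (hX.1 hab).imp (mem_erase.2 ⟨ha, ·⟩) (mem_erase.2 ⟨hb, ·⟩)

theorem IsMinVC.notMem_of_forall_adj_eq (hX : IsMinVC G X) {v w : V}
    (hw : ∀ u, G.Adj v u → u = w) (hv : v ∈ X) : w ∉ X := by
  obtain ⟨u, hvu, hu⟩ := hX.exists_adj_notMem hv
  exact hw u hvu ▸ hu

end

theorem card_eq_two_of_path_cover_fin_four (S : Finset (Fin 4)) (h01 : 0 ∈ S ∨ 1 ∈ S)
    (h12 : 1 ∈ S ∨ 2 ∈ S) (h23 : 2 ∈ S ∨ 3 ∈ S) (h0 : 0 ∈ S → 1 ∉ S) (h3 : 3 ∈ S → 2 ∉ S) :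
    #S = 2 := by
  revert S; decide

theorem card_eq_sum_card_inl_add_card_inr {ι κ γ : Type*} [Fintype ι] [Fintype κ] [Fintype γ]
    [DecidableEq ι] [DecidableEq κ] [DecidableEq γ] (X : Finset ((ι × κ) ⊕ γ)) :
    #X = ∑ i, #{p | Sum.inl (i, p) ∈ X} + #{j | Sum.inr j ∈ X} := by
  rw [← card_toLeft_add_card_toRight]
  congr 1
  · rw [card_eq_sum_card_fiberwise (f := Prod.fst) (t := univ) fun _ _ => mem_univ _]
    refine sum_congr rfl fun i _ => ?_
    have : {x ∈ X.toLeft | x.1 = i} =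
        ({p | Sum.inl (i, p) ∈ X} : Finset κ).map ⟨(i, ·), Prod.mk_right_injective i⟩ := by
      ext ⟨i', p⟩
      aesop
    rw [this, card_map]
  · congr 1
    ext j
    simp

theorem card_filter_exists_inl_eq {ι κ γ : Type*} [Fintype κ] [DecidableEq ι] [DecidableEq κ]
    [DecidableEq γ] (X : Finset ((ι × κ) ⊕ γ)) (i : ι) :
    #(X.filter fun v => ∃ p, v = Sum.inl (i, p)) = #{p | Sum.inl (i, p) ∈ X} := by
  have : (X.filter fun v => ∃ p, v = Sum.inl (i, p)) = ({p | Sum.inl (i, p) ∈ X} : Finset κ).map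
      ⟨fun p => Sum.inl (i, p), Sum.inl_injective.comp (Prod.mk_right_injective i)⟩ := by
    ext v
    aesop
  rw [this, card_map]

namespace RedGraph

variable {n m : ℕ} {pos neg : Fin m → Finset (Fin n)}

theorem adj_inl_zero (i : Fin n) {v} :
    (RedGraph n m pos neg).Adj (.inl (i, 0)) v ↔ v = .inl (i, 1) := by
  rcases v with ⟨i', q⟩ | j
  · fin_cases q <;> simp [RedGraph, eq_comm]
  · simp [RedGraph]

theorem adj_inl_three (i : Fin n) {v} :
    (RedGraph n m pos neg).Adj (.inl (i, 3)) v ↔ v = .inl (i, 2) := by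
  rcases v with ⟨i', q⟩ | j
  · fin_cases q <;> simp [RedGraph, eq_comm]
  · simp [RedGraph]

theorem adj_inl_one_two (i : Fin n) : (RedGraph n m pos neg).Adj (.inl (i, 1)) (.inl (i, 2)) := by
  simp [RedGraph]

theorem card_gadget_eq_two_of_isMinVC {X : Finset ((Fin n × Fin 4) ⊕ Fin m)}
    (hX : IsMinVC (RedGraph n m pos neg) X) (i : Fin n) : #{p | Sum.inl (i, p) ∈ X} = 2 := by
  apply card_eq_two_of_path_cover_fin_four <;> simp only [mem_filter, mem_univ, true_and]
  · exact hX.1 ((adj_inl_zero i).2 rfl)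
  · exact hX.1 (adj_inl_one_two i)
  · exact (hX.1 ((adj_inl_three i).2 rfl)).symm
  · exact hX.notMem_of_forall_adj_eq fun _ => (adj_inl_zero i).1
  · exact hX.notMem_of_forall_adj_eq fun _ => (adj_inl_three i).1

end RedGraph

theorem redgraph_minimal_vc_structure_general (n m : ℕ) (pos neg : Fin m → Finset (Fin n))
    (X : Finset ((Fin n × Fin 4) ⊕ Fin m))
    (hX : IsMinVC (RedGraph n m pos neg) X) :
    (∀ i : Fin n,
      (X.filter (fun v => ∃ p : Fin 4, v = Sum.inl (i, p))).card = 2) ∧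
    X.card ≤ 2 * n + m ∧
    (X.card = 2 * n + m ↔ ∀ j : Fin m, (Sum.inr j : (Fin n × Fin 4) ⊕ Fin m) ∈ X) := by
  have hgadget := RedGraph.card_gadget_eq_two_of_isMinVC hX
  have hcard : #X = 2 * n + #{j | Sum.inr j ∈ X} := by
    simp [card_eq_sum_card_inl_add_card_inr X, hgadget, mul_comm]
  refine ⟨fun i => by convert (card_filter_exists_inl_eq X i).trans (hgadget i), ?_, ?_⟩
  · have := card_filter_le (univ : Finset (Fin m)) (Sum.inr · ∈ X)
    rw [card_fin] at this
    omega
  · rw [hcard, Nat.add_left_cancel_iff]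
    simpa using card_filter_eq_iff (s := (univ : Finset (Fin m))) (p := (Sum.inr · ∈ X))

/-- Any minimal vertex cover of the reduction graph contains exactly two
vertices of each variable path; consequently it has size at most `2n + m`, with
equality iff it contains all clause vertices. -/
theorem redgraph_minimal_vc_structure (n m : ℕ) (pos neg : Fin m → Finset (Fin n))
    (hmono : ∀ j : Fin m, pos j = ∅ ∨ neg j = ∅)
    (X : Finset ((Fin n × Fin 4) ⊕ Fin m))
    (hX : IsMinVC (RedGraph n m pos neg) X) :
    (∀ i : Fin n,
      (X.filter (fun v => ∃ p : Fin 4, v = Sum.inl (i, p))).card = 2) ∧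
    X.card ≤ 2 * n + m ∧
    (X.card = 2 * n + m ↔ ∀ j : Fin m, (Sum.inr j : (Fin n × Fin 4) ⊕ Fin m) ∈ X) :=
  redgraph_minimal_vc_structure_general n m pos neg X hX
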